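/- arXiv:1604.07467 — 2 statements merged into one kernel-verified Lean document; each statement's English description precedes it below -/
import Mathlib

section
/- Let T ≥ 0 and let Ŝ_0, ..., Ŝ_T be given nonnegative reals. Define sequences by downward recursion for i = T down to 0: M̂_{T+1} = 0, M̂_i = max(M̂_{i+1}, Ŝ_i), B_{T+1} = 0, Δ_i = max(0, M̂_i - 2·B_{i+1}), B_i = B_{i+1} + Δ_i. Then for all 0 ≤ i ≤ T, B_i ≤ M̂_i ≤ 2·B_i. -/
/-- Lemma 5.1 abstracted: for the downward recursion
`M̂_{T+1} = 0`, `M̂_i = max(M̂_{i+1}, Ŝ_i)`, `B_{T+1} = 0`,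
`Δ_i = max(0, M̂_i − 2B_{i+1})`, `B_i = B_{i+1} + Δ_i`,
one has `B_i ≤ M̂_i ≤ 2 B_i` for all `0 ≤ i ≤ T`. -/
theorem stmt_3 (T : ℕ) (Shat Mhat B Δ : ℕ → ℝ)
    (hS : ∀ i ≤ T, 0 ≤ Shat i)
    (hMtop : Mhat (T + 1) = 0)
    (hM : ∀ i ≤ T, Mhat i = max (Mhat (i + 1)) (Shat i))
    (hBtop : B (T + 1) = 0)
    (hΔ : ∀ i ≤ T, Δ i = max 0 (Mhat i - 2 * B (i + 1)))
    (hB : ∀ i ≤ T, B i = B (i + 1) + Δ i) :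
    ∀ i ≤ T, B i ≤ Mhat i ∧ Mhat i ≤ 2 * B i := by
  have key : ∀ j, j ≤ T + 1 →
      0 ≤ B (T + 1 - j) ∧ B (T + 1 - j) ≤ Mhat (T + 1 - j) ∧
        Mhat (T + 1 - j) ≤ 2 * B (T + 1 - j) := by
    intro j
    induction j with
    | zero => intro _; simp [hBtop, hMtop]
    | succ j ih =>
      intro hj
      have hjT : j ≤ T := by omega
      obtain ⟨ihB0, ihBM, ihM2B⟩ := ih (by omega)
      set i := T - j with hi
      have hiT : i ≤ T := by omega
      have h1 : T + 1 - (j + 1) = i := by omega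
      have h2 : T + 1 - j = i + 1 := by omega
      rw [h1]
      rw [h2] at ihB0 ihBM ihM2B
      have hMi := hM i hiT
      have hMge : Mhat (i + 1) ≤ Mhat i := by rw [hMi]; exact le_max_left _ _
      have hSi := hS i hiT
      have hMi0 : 0 ≤ Mhat i := by rw [hMi]; exact le_trans hSi (le_max_right _ _)
      have hBi : B i = B (i + 1) + max 0 (Mhat i - 2 * B (i + 1)) := by
        rw [hB i hiT, hΔ i hiT]
      rcases le_or_gt (Mhat i) (2 * B (i + 1)) with h | h
      · have : max 0 (Mhat i - 2 * B (i + 1)) = 0 := max_eq_left (by linarith)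
        rw [this, add_zero] at hBi
        rw [hBi]
        exact ⟨ihB0, le_trans ihBM hMge, h⟩
      · have : max 0 (Mhat i - 2 * B (i + 1)) = Mhat i - 2 * B (i + 1) :=
          max_eq_right (by linarith)
        rw [this] at hBi
        refine ⟨by rw [hBi]; linarith, by rw [hBi]; linarith, by rw [hBi]; linarith⟩
  intro i hi
  have := key (T + 1 - i) (by omega)
  have h : T + 1 - (T + 1 - i) = i := by omega
  rw [h] at this
  exact ⟨this.2.1, this.2.2⟩
end

section
/- Main reduction theorem (deterministic core): Let λ ≥ 1, ε > 0, T ∈ ℕ. Let U_T ≤ U_{T-1} ≤ ... ≤ U_0 be nonnegative reals (maximum matching sizes of nested edge sets S_T ⊆ ... ⊆ S_0) and suppose estimators M̂_i satisfy M̂_i ≤ U_i ≤ λ M̂_i and M̂_i = max(M̂_{i+1}, Ŝ_i) with M̂_{T+1}=0. Define Δ_i, B_i, A_i by the downward recursions Δ_i = max(0, M̂_i − 2B_{i+1}), B_i = B_{i+1}+Δ_i, A_i = A_{i+1}+(1+ε)^i Δ_i, with B_{T+1}=A_{T+1}=0. If additionally for every j the tail counts m_j := |M*∩(S_j\S_{j+1})|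 of a maximum weight matching M* satisfy Σ_{i=j}^T Δ_i ≤ Σ_{i=j}^T m_i ≤ 2λ Σ_{i=j}^T Δ_i, and Σ_{i} (1+ε)^i m_i ≤ w(M*) ≤ (1+ε) Σ_i (1+ε)^i m_i, then A_0 ≤ w(M*) ≤ 2λ(1+ε) A_0. -/
/-!
Unrolling the recursion gives `A 0 = ∑ (1+ε)^i Δ_i`. Since the weights `(1+ε)^i` increase with `i`,
Abel summation turns the tail-sum sandwich `∑_{i≥j} Δ_i ≤ ∑_{i≥j} m_i ≤ 2λ ∑_{i≥j} Δ_i` into the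
same sandwich for the weighted sums, and the bucketing bounds on `w(M*)` finish the argument.
-/

open Finset

lemma sum_Icc_eq_add_sum_Icc_succ {M : Type*} [AddCommMonoid M] {j T : ℕ} (hjT : j ≤ T)
    (f : ℕ → M) : ∑ i ∈ Icc j T, f i = f j + ∑ i ∈ Icc (j + 1) T, f i := by
  rw [Icc_add_one_left_eq_Ioc, add_sum_Ioc_eq_sum_Icc hjT]

lemma eq_sum_Icc_of_eq_add {M : Type*} [AddCommMonoid M] {T : ℕ} {A f : ℕ → M}
    (htop : A (T + 1) = 0) (hA : ∀ i ≤ T, A i = A (i + 1) + f i) {j : ℕ} (hj : j ≤ T + 1) :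
    A j = ∑ i ∈ Icc j T, f i := by
  induction hj using Nat.decreasingInduction with
  | self => simp [htop]
  | of_succ k hk ih =>
    rw [sum_Icc_eq_add_sum_Icc_succ (by omega), ← ih, hA k (by omega), add_comm]

lemma mul_sum_Icc_le_sum_Icc_mul {c z : ℕ → ℝ} {T : ℕ} (hc : Monotone c)
    (hz : ∀ j ≤ T, 0 ≤ ∑ i ∈ Icc j T, z i) {j : ℕ} (hj : j ≤ T + 1) :
    c j * ∑ i ∈ Icc j T, z i ≤ ∑ i ∈ Icc j T, c i * z i := by
  induction hj using Nat.decreasingInduction with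
  | self => simp
  | of_succ k hk ih =>
    have htail : 0 ≤ ∑ i ∈ Icc (k + 1) T, z i := by
      rcases Nat.lt_or_ge T (k + 1) with h | h
      · simp [Icc_eq_empty_of_lt h]
      · exact hz _ h
    have hshift := mul_le_mul_of_nonneg_right (hc (by omega : k ≤ k + 1)) htail
    rw [sum_Icc_eq_add_sum_Icc_succ (by omega) z,
      sum_Icc_eq_add_sum_Icc_succ (by omega) fun i => c i * z i, mul_add]
    linarith

lemma sum_Icc_mul_le_of_tail_le {c f g : ℕ → ℝ} {T : ℕ} (hc : Monotone c) (hc0 : 0 ≤ c 0)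
    (hfg : ∀ j ≤ T, ∑ i ∈ Icc j T, f i ≤ ∑ i ∈ Icc j T, g i) :
    ∑ i ∈ Icc 0 T, c i * f i ≤ ∑ i ∈ Icc 0 T, c i * g i := by
  have hz : ∀ j ≤ T, 0 ≤ ∑ i ∈ Icc j T, (g i - f i) := fun j hj => by
    rw [sum_sub_distrib]
    linarith [hfg j hj]
  have habel := mul_sum_Icc_le_sum_Icc_mul hc hz (Nat.zero_le _)
  have hpos := mul_nonneg hc0 (hz 0 (Nat.zero_le _))
  simp only [mul_sub, sum_sub_distrib] at habel hpos
  linarith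

theorem stmt_11_general (T : ℕ) (lam ε : ℝ) (hε : 0 < ε)
    (Δ A m : ℕ → ℝ) (wM : ℝ)
    (hAtop : A (T + 1) = 0)
    (hA : ∀ i ≤ T, A i = A (i + 1) + (1 + ε) ^ i * Δ i)
    (htail : ∀ j ≤ T, ∑ i ∈ Finset.Icc j T, Δ i ≤ ∑ i ∈ Finset.Icc j T, m i ∧
        ∑ i ∈ Finset.Icc j T, m i ≤ 2 * lam * ∑ i ∈ Finset.Icc j T, Δ i)
    (hbucket : ∑ i ∈ Finset.range (T + 1), (1 + ε) ^ i * m i ≤ wM ∧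
        wM ≤ (1 + ε) * ∑ i ∈ Finset.range (T + 1), (1 + ε) ^ i * m i) :
    A 0 ≤ wM ∧ wM ≤ 2 * lam * (1 + ε) * A 0 := by
  have hmono : Monotone fun i : ℕ => (1 + ε) ^ i := pow_right_mono₀ (by linarith)
  have hA0 : A 0 = ∑ i ∈ Icc 0 T, (1 + ε) ^ i * Δ i := eq_sum_Icc_of_eq_add hAtop hA (by omega)
  have hlower : ∑ i ∈ Icc 0 T, (1 + ε) ^ i * Δ i ≤ ∑ i ∈ Icc 0 T, (1 + ε) ^ i * m i :=
    sum_Icc_mul_le_of_tail_le hmono (by simp) fun j hj => (htail j hj).1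
  have hupper : ∑ i ∈ Icc 0 T, (1 + ε) ^ i * m i ≤ 2 * lam * ∑ i ∈ Icc 0 T, (1 + ε) ^ i * Δ i := by
    have := sum_Icc_mul_le_of_tail_le (g := fun i => 2 * lam * Δ i) hmono (by simp) fun j hj => by
      simpa only [← mul_sum] using (htail j hj).2
    simpa only [mul_left_comm _ (2 * lam), ← mul_sum] using this
  obtain ⟨hw_lower, hw_upper⟩ := hbucket
  rw [Nat.range_succ_eq_Icc_zero] at hw_lower hw_upper
  refine ⟨by linarith, ?_⟩
  calc wM ≤ (1 + ε) * ∑ i ∈ Icc 0 T, (1 + ε) ^ i * m i := hw_upper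
    _ ≤ (1 + ε) * (2 * lam * A 0) := by rw [hA0]; gcongr
    _ = 2 * lam * (1 + ε) * A 0 := by ring

/-- Main reduction theorem (deterministic core, Theorem 2.1 abstracted to real
sequences): given the estimator recursions of Algorithm 1, the tail-sum
sandwich of Lemma 5.3 and the geometric bucketing bounds, the output `A_0` is
a `2λ(1+ε)`-approximation of `w(M*)`. -/
theorem stmt_11 (T : ℕ) (lam ε : ℝ) (hlam : 1 ≤ lam) (hε : 0 < ε)
    (U Shat Mhat B Δ A m : ℕ → ℝ) (wM : ℝ)
    (hUnonneg : ∀ i ≤ T, 0 ≤ U i)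
    (hUmono : ∀ i, i + 1 ≤ T → U (i + 1) ≤ U i)
    (hSnonneg : ∀ i ≤ T, 0 ≤ Shat i)
    (hMtop : Mhat (T + 1) = 0)
    (hMrec : ∀ i ≤ T, Mhat i = max (Mhat (i + 1)) (Shat i))
    (hest : ∀ i ≤ T, Mhat i ≤ U i ∧ U i ≤ lam * Mhat i)
    (hBtop : B (T + 1) = 0) (hAtop : A (T + 1) = 0)
    (hΔ : ∀ i ≤ T, Δ i = max 0 (Mhat i - 2 * B (i + 1)))
    (hB : ∀ i ≤ T, B i = B (i + 1) + Δ i)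
    (hA : ∀ i ≤ T, A i = A (i + 1) + (1 + ε) ^ i * Δ i)
    (hmnonneg : ∀ i ≤ T, 0 ≤ m i)
    (htail : ∀ j ≤ T, ∑ i ∈ Finset.Icc j T, Δ i ≤ ∑ i ∈ Finset.Icc j T, m i ∧
        ∑ i ∈ Finset.Icc j T, m i ≤ 2 * lam * ∑ i ∈ Finset.Icc j T, Δ i)
    (hbucket : ∑ i ∈ Finset.range (T + 1), (1 + ε) ^ i * m i ≤ wM ∧
        wM ≤ (1 + ε) * ∑ i ∈ Finset.range (T + 1), (1 + ε) ^ i * m i) :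
    A 0 ≤ wM ∧ wM ≤ 2 * lam * (1 + ε) * A 0 :=
  stmt_11_general T lam ε hε Δ A m wM hAtop hA htail hbucket
end
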